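/- Let f = e^{-φ} ∈ LC_n with 0 < ∫ f < ∞, set ψ = h_f = φ*, and let v : ℝⁿ → ℝ be bounded and continuous. Then the two-sided derivative (d/dt)|_{t=0} ∫ e^{-(ψ + tv)*} exists and equals ∫ v dS_f. -/

import Mathlib

open MeasureTheory Filter Topology Set
open scoped ENNReal NNReal

noncomputable section

abbrev Euc (n : ℕ) := EuclideanSpace ℝ (Fin n)

variable {n : ℕ}

/-- Legendre transform of an extended-real-valued function. -/
def legendre (ψ : Euc n → EReal) (x : Euc n) : EReal :=
  ⨆ y, ((inner ℝ x y : ℝ) : EReal) - ψ y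

/-- Log-concavity. -/
def IsLogConcave (f : Euc n → ℝ) : Prop :=
  (∀ x, 0 ≤ f x) ∧ ∀ x y : Euc n, ∀ l : ℝ, 0 ≤ l → l ≤ 1 →
    f x ^ (1 - l) * f y ^ l ≤ f ((1 - l) • x + l • y)

/-- `- log f`, with value `⊤` where `f` vanishes. -/
def negLog (f : Euc n → ℝ) (x : Euc n) : EReal :=
  if f x = 0 then ⊤ else ((- Real.log (f x) : ℝ) : EReal)

/-- The support function `h_f = (-log f)^*`. -/
def suppFn (f : Euc n → ℝ) : Euc n → EReal := legendre (negLog f)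

/-- The gradient `∇φ` of `φ = - log f`. -/
def negLogGrad (f : Euc n → ℝ) (x : Euc n) : Euc n :=
  gradient (fun y => - Real.log (f y)) x

/-- The measure `f(x) dx`. -/
def fMeasure (f : Euc n → ℝ) : Measure (Euc n) :=
  volume.withDensity fun x => ENNReal.ofReal (f x)

/-- Positive part of an extended real, as an element of `[0,∞]`. -/
def posPart (a : EReal) : ℝ≥0∞ := if a = ⊤ then ⊤ else ENNReal.ofReal a.toReal

/-- `∫ ρ dS_f = ∫ ρ(∇φ(x)) f(x) dx` as an extended real number. -/
def SfInt (f : Euc n → ℝ) (ρ : Euc n → EReal) : EReal :=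
  ((∫⁻ x, posPart (ρ (negLogGrad f x)) ∂(fMeasure f) : ℝ≥0∞) : EReal)
    - ((∫⁻ x, posPart (-(ρ (negLogGrad f x))) ∂(fMeasure f) : ℝ≥0∞) : EReal)

/-- The Asplund sum (sup-convolution) of two log-concave functions. -/
def asplund (f g : Euc n → ℝ) (x : Euc n) : ℝ := ⨆ y, f y * g (x - y)

/-- Dilation `(t·g)(x) = g(x/t)^t`. -/
def dil (t : ℝ) (g : Euc n → ℝ) (x : Euc n) : ℝ := g (t⁻¹ • x) ^ t

/-- Difference quotient of `t ↦ ∫ f ⋆ (t·g)` at `0`, as an extended real. -/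
def deltaQuot (f g : Euc n → ℝ) (t : ℝ) : EReal :=
  (((∫⁻ x, ENNReal.ofReal (asplund f (dil t g) x) : ℝ≥0∞) : EReal)
    - ((∫⁻ x, ENNReal.ofReal (f x) : ℝ≥0∞) : EReal)) * ((t⁻¹ : ℝ) : EReal)

/-- Essential continuity of a log-concave function. -/
def EssCont (f : Euc n → ℝ) : Prop :=
  μH[(n : ℝ) - 1] {x : Euc n | ¬ ContinuousAt f x} = 0

/-- `e^{-a}` for an extended real `a`, valued in `[0,∞]`. -/
def expNeg (a : EReal) : ℝ≥0∞ :=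
  if a = ⊤ then 0 else if a = ⊥ then ⊤ else ENNReal.ofReal (Real.exp (- a.toReal))

/-!
Write `φ = -log f` and `ψ = h_f = φ^*`. At almost every point `x` of the support of `f` the convex
function `φ` is differentiable (Rademacher), and Fenchel–Young gives `ψ(∇φ x) = ⟪∇φ x, x⟫ - φ x`,
so the term `y = ∇φ x` of the supremum yields `(ψ + t v)^*(x) ≥ φ x - t v(∇φ x)`. Conversely,
differentiability of `φ` at `x` makes `ψ` grow linearly away from `∇φ x`, so for small `t` the
supremum defining `(ψ + t v)^*(x)` is attained near `∇φ x`, where `v` is close to `v(∇φ x)`; hence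
`d/dt (ψ + t v)^*(x) = -v(∇φ x)` at `t = 0`. Outside the closure of the support `(ψ + t v)^* = +∞`,
because `f` is bounded (log-concavity plus finite integral) and the support can be separated from
`x`. Since `|(ψ + t v)^* - (ψ + s v)^*| ≤ M |t - s|`, the integrands `e^{-(ψ + t v)^*}` are
Lipschitz in `t` with constant `e^M M f`, and differentiation under the integral sign gives
`∫ v(∇φ) f`.
-/

theorem ConvexOn.add_apply_sub_le {E : Type*} [NormedAddCommGroup E] [NormedSpace ℝ E]
    {s : Set E} {g : E → ℝ} {g' : E →L[ℝ] ℝ} {x z : E} (hg : ConvexOn ℝ s g) (hx : x ∈ s)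
    (hz : z ∈ s) (hg' : HasFDerivAt g g' x) : g x + g' (z - x) ≤ g z := by
  set L : ℝ →ᵃ[ℝ] E := AffineMap.lineMap x z
  have hderiv : HasDerivAt (g ∘ L) (g' (z - x)) 0 := by
    have hL : HasDerivAt L (z - x) 0 := AffineMap.hasDerivAt_lineMap
    exact (by simpa [L] using hg' : HasFDerivAt g g' (L 0)).comp_hasDerivAt 0 hL
  have := (hg.comp_affineMap L).le_slope_of_hasDerivAt (by simpa [L] using hx)
    (by simpa [L] using hz) one_pos hderiv
  simp only [slope_def_field, Function.comp_apply, L, AffineMap.lineMap_apply_one,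
    AffineMap.lineMap_apply_zero, sub_zero, div_one] at this
  linarith

theorem LocallyLipschitzOn.ae_differentiableAt {E F : Type*} [NormedAddCommGroup E]
    [NormedSpace ℝ E] [FiniteDimensional ℝ E] [MeasurableSpace E] [BorelSpace E]
    [NormedAddCommGroup F] [NormedSpace ℝ F] [FiniteDimensional ℝ F]
    (μ : Measure E) [μ.IsAddHaarMeasure] {s : Set E} {g : E → F} (hs : IsOpen s)
    (hg : LocallyLipschitzOn s g) : ∀ᵐ x ∂μ, x ∈ s → DifferentiableAt ℝ g x := by
  rw [ae_iff]
  refine measure_null_of_locally_null _ fun x hx => ?_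
  obtain ⟨hxs, -⟩ := Classical.not_imp.mp hx
  obtain ⟨C, t, ht, hlip⟩ := hg hxs
  rw [hs.nhdsWithin_eq hxs, ← interior_mem_nhds] at ht
  refine ⟨_, inter_mem_nhdsWithin _ ht, measure_mono_null (fun y ⟨hy, hyt⟩ => ?_)
    (ae_iff.mp (hlip.ae_differentiableWithinAt_of_mem (μ := μ)))⟩
  exact fun hdiff => (Classical.not_imp.mp hy).2
    ((hdiff (interior_subset hyt)).differentiableAt (mem_interior_iff_mem_nhds.mp hyt))

theorem ConvexOn.ae_differentiableAt_of_mem_interior {E : Type*} [NormedAddCommGroup E]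
    [NormedSpace ℝ E] [FiniteDimensional ℝ E] [MeasurableSpace E] [BorelSpace E]
    (μ : Measure E) [μ.IsAddHaarMeasure] {s : Set E} {g : E → ℝ} (hg : ConvexOn ℝ s g) :
    ∀ᵐ x ∂μ, x ∈ interior s → DifferentiableAt ℝ g x :=
  hg.locallyLipschitzOn_interior.ae_differentiableAt μ isOpen_interior

theorem Real.abs_exp_sub_exp_le {p q a : ℝ} (hp : p ≤ a) (hq : q ≤ a) :
    |Real.exp p - Real.exp q| ≤ Real.exp a * |p - q| := by
  wlog hqp : q ≤ p generalizing p q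
  · rw [abs_sub_comm, abs_sub_comm p]
    exact this hq hp (le_of_not_ge hqp)
  rw [abs_of_nonneg (sub_nonneg.mpr (Real.exp_le_exp.mpr hqp)), abs_of_nonneg (sub_nonneg.mpr hqp)]
  have h1 : Real.exp q = Real.exp p * Real.exp (q - p) := by rw [← Real.exp_add]; ring_nf
  have h2 := Real.add_one_le_exp (q - p)
  have h3 := Real.exp_le_exp.mpr hp
  nlinarith [Real.exp_pos p, Real.exp_pos a]

theorem EReal.coe_sub_le_comm {a : ℝ} {b c : EReal} (h : a - b ≤ c) : a - c ≤ b := by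
  induction b using EReal.rec with
  | bot => rw [EReal.coe_sub_bot, top_le_iff] at h; simp [h]
  | coe b => exact EReal.sub_le_of_le_add' ((EReal.sub_le_iff_le_add (by simp) (by simp)).mp h)
  | top => simp_all

theorem EReal.coe_sub_le_coe_sub_add {a c : ℝ} {p q : EReal} (h : q ≤ p + c) :
    a - p ≤ (a - q) + c := by
  induction p using EReal.rec with
  | bot => simp_all
  | coe p =>
    induction q using EReal.rec with
    | bot => simp
    | coe q => norm_cast at h ⊢; linarith
    | top => exact absurd (top_le_iff.mp h) (EReal.coe_add p c ▸ EReal.coe_ne_top _)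
  | top => simp

theorem lowerSemicontinuous_legendre (ψ : Euc n → EReal) : LowerSemicontinuous (legendre ψ) := by
  refine lowerSemicontinuous_iSup fun y => Continuous.lowerSemicontinuous ?_
  have hinner : Continuous fun x : Euc n => inner ℝ x y := continuous_id.inner continuous_const
  generalize ψ y = c
  induction c using EReal.rec with
  | bot => simpa using continuous_const
  | coe c =>
    simp only [← EReal.coe_sub]
    exact continuous_coe_real_ereal.comp (hinner.sub continuous_const)
  | top => simpa using continuous_const

theorem coe_inner_sub_le_legendre (ψ : Euc n → EReal) (x y : Euc n) :
    (inner ℝ x y : ℝ) - ψ y ≤ legendre ψ x :=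
  le_iSup (fun y => ((inner ℝ x y : ℝ) : EReal) - ψ y) y

theorem legendre_le_add_of_le_add {ψ₁ ψ₂ : Euc n → EReal} {c : ℝ} (h : ∀ y, ψ₂ y ≤ ψ₁ y + c)
    (x : Euc n) : legendre ψ₁ x ≤ legendre ψ₂ x + c :=
  iSup_le fun y => (EReal.coe_sub_le_coe_sub_add (h y)).trans
    (add_le_add_left (coe_inner_sub_le_legendre ψ₂ x y) _)

theorem legendre_legendre_le (g : Euc n → EReal) (x : Euc n) : legendre (legendre g) x ≤ g x :=
  iSup_le fun y => EReal.coe_sub_le_comm (real_inner_comm x y ▸ coe_inner_sub_le_legendre g y x)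

theorem legendre_add_le {ψ : Euc n → EReal} {g : Euc n → ℝ} {x : Euc n} {c : ℝ}
    (h : ∀ y, ((inner ℝ x y - g y - c : ℝ) : EReal) ≤ ψ y) :
    legendre (fun y => ψ y + (g y : EReal)) x ≤ c := by
  refine iSup_le fun y => ?_
  specialize h y
  change ((inner ℝ x y : ℝ) : EReal) - (ψ y + g y) ≤ c
  generalize ψ y = p at h ⊢
  induction p using EReal.rec with
  | bot => exact ((EReal.bot_lt_coe _).not_ge h).elim
  | coe p => norm_cast at h ⊢; linarith
  | top => simp

theorem expNeg_coe (r : ℝ) : expNeg r = ENNReal.ofReal (Real.exp (-r)) := by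
  simp [expNeg]

theorem expNeg_top : expNeg ⊤ = 0 := by simp [expNeg]

theorem expNeg_lt_top {a : EReal} (ha : a ≠ ⊥) : expNeg a < ⊤ := by
  unfold expNeg
  split_ifs <;> simp_all

theorem antitone_expNeg : Antitone expNeg := by
  intro a b hab
  induction a using EReal.rec with
  | bot => simp [expNeg]
  | coe r =>
    induction b using EReal.rec with
    | bot => exact absurd hab (by simp)
    | coe s =>
      rw [expNeg_coe, expNeg_coe]
      exact ENNReal.ofReal_le_ofReal
        (Real.exp_le_exp.mpr (neg_le_neg (EReal.coe_le_coe_iff.mp hab)))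
    | top => simp [expNeg]
  | top => simp [top_le_iff.mp hab]

theorem measurable_expNeg : Measurable expNeg := antitone_expNeg.measurable

def posSet (f : Euc n → ℝ) : Set (Euc n) := {y | 0 < f y}

-- `φ = -log f` on `posSet f`; where `f` vanishes, `Real.log 0 = 0` makes it `0`, not `+∞`
def potential (f : Euc n → ℝ) (y : Euc n) : ℝ := -Real.log (f y)

def perturbedSuppFn (f v : Euc n → ℝ) (t : ℝ) (y : Euc n) : EReal :=
  suppFn f y + ((t * v y : ℝ) : EReal)

theorem measurable_negLogGrad (f : Euc n → ℝ) : Measurable (negLogGrad f) :=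
  (InnerProductSpace.toDual ℝ (Euc n)).symm.continuous.measurable.comp (measurable_fderiv ℝ _)

section LogConcave

variable {f : Euc n → ℝ} {x : Euc n}

theorem negLog_of_pos (hx : 0 < f x) : negLog f x = potential f x := by
  simp [negLog, hx.ne', potential]

theorem exp_neg_potential (hx : 0 < f x) : Real.exp (-potential f x) = f x := by
  simp [potential, Real.exp_log hx]

theorem IsLogConcave.convex_posSet (hlc : IsLogConcave f) : Convex ℝ (posSet f) := by
  intro x hx y hy a b ha hb hab
  obtain rfl : a = 1 - b := by linarith
  exact (mul_pos (Real.rpow_pos_of_pos hx _) (Real.rpow_pos_of_pos hy _)).trans_le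
    (hlc.2 x y b hb (by linarith))

theorem IsLogConcave.convexOn_potential (hlc : IsLogConcave f) :
    ConvexOn ℝ (posSet f) (potential f) := by
  refine ⟨hlc.convex_posSet, fun x (hx : 0 < f x) y (hy : 0 < f y) a b ha hb hab => ?_⟩
  obtain rfl : a = 1 - b := by linarith
  have h := Real.log_le_log (mul_pos (Real.rpow_pos_of_pos hx _) (Real.rpow_pos_of_pos hy _))
    (hlc.2 x y b hb (by linarith))
  rw [Real.log_mul (Real.rpow_pos_of_pos hx _).ne' (Real.rpow_pos_of_pos hy _).ne',
    Real.log_rpow hx, Real.log_rpow hy] at h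
  simp only [potential, smul_eq_mul]
  linarith

theorem coe_inner_sub_potential_le_suppFn {z : Euc n} (hz : 0 < f z) (y : Euc n) :
    ((inner ℝ y z - potential f z : ℝ) : EReal) ≤ suppFn f y := by
  rw [EReal.coe_sub, ← negLog_of_pos hz]
  exact coe_inner_sub_le_legendre _ y z

theorem suppFn_le (hf : ∀ z, 0 ≤ f z) {y : Euc n} {c : ℝ}
    (h : ∀ z, 0 < f z → inner ℝ y z - potential f z ≤ c) : suppFn f y ≤ c := by
  refine iSup_le fun z => ?_
  rcases (hf z).eq_or_lt with hz | hz
  · simp [negLog, ← hz]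
  · rw [negLog_of_pos hz, ← EReal.coe_sub, EReal.coe_le_coe_iff]
    exact h z hz

theorem pos_of_mem_interior_posSet (hx : x ∈ interior (posSet f)) : 0 < f x :=
  interior_subset (s := posSet f) hx

theorem suppFn_negLogGrad (hlc : IsLogConcave f) (hx : x ∈ interior (posSet f))
    (hd : DifferentiableAt ℝ (potential f) x) :
    suppFn f (negLogGrad f x) = ((inner ℝ (negLogGrad f x) x - potential f x : ℝ) : EReal) := by
  refine le_antisymm (suppFn_le hlc.1 fun z hz => ?_)
    (coe_inner_sub_potential_le_suppFn (pos_of_mem_interior_posSet hx) _)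
  have h := hlc.convexOn_potential.add_apply_sub_le (interior_subset hx) hz hd.hasFDerivAt
  rw [← inner_gradient_left, inner_sub_right] at h
  change potential f x + (inner ℝ (negLogGrad f x) z - inner ℝ (negLogGrad f x) x) ≤ _ at h
  linarith

theorem exists_pos_coe_le_suppFn (hx : x ∈ interior (posSet f))
    (hd : DifferentiableAt ℝ (potential f) x) {ε : ℝ} (hε : 0 < ε) :
    ∃ r > 0, ∀ y,
      ((inner ℝ y x - potential f x + r * (‖y - negLogGrad f x‖ - ε) : ℝ) : EReal) ≤
        suppFn f y := by
  set y₀ := negLogGrad f x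
  obtain ⟨ρ, hρ, hball⟩ := Metric.eventually_nhds_iff.mp
    (((hasGradientAt_iff_isLittleO.mp hd.hasGradientAt).def hε).and
      (mem_interior_iff_mem_nhds.mp hx))
  refine ⟨ρ / 2, half_pos hρ, fun y => ?_⟩
  set w := y - y₀
  set z := x + (ρ / 2 * ‖w‖⁻¹) • w
  have hzx : z - x = (ρ / 2 * ‖w‖⁻¹) • w := add_sub_cancel_left _ _
  have hnorm : ‖z - x‖ ≤ ρ / 2 := by
    rw [hzx, norm_smul, Real.norm_of_nonneg (by positivity), mul_assoc]
    rcases eq_or_ne ‖w‖ 0 with h | h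
    · simp [h]; linarith
    · rw [inv_mul_cancel₀ h, mul_one]
  have hinner : inner ℝ w (z - x) = ρ / 2 * ‖w‖ := by
    rw [hzx, real_inner_smul_right, real_inner_self_eq_norm_sq]
    rcases eq_or_ne ‖w‖ 0 with h | h
    · simp [h]
    · field_simp
  have hsplit : inner ℝ y z = inner ℝ y x + inner ℝ y₀ (z - x) + inner ℝ w (z - x) := by
    rw [add_assoc, ← inner_add_left, add_sub_cancel, ← inner_add_right, add_sub_cancel]
  obtain ⟨hlo, hz⟩ := hball (show dist z x < ρ by rw [dist_eq_norm]; linarith)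
  refine le_trans ?_ (coe_inner_sub_potential_le_suppFn hz y)
  rw [EReal.coe_le_coe_iff]
  have hφ : potential f z - potential f x - inner ℝ y₀ (z - x) ≤ ε * ‖z - x‖ :=
    (le_abs_self _).trans hlo
  linarith [mul_le_mul_of_nonneg_left hnorm hε.le]

end LogConcave

section Perturbation

variable {f v : Euc n → ℝ} {M : ℝ} {x : Euc n}

theorem perturbedSuppFn_zero : perturbedSuppFn f v 0 = suppFn f := by
  funext y
  simp [perturbedSuppFn]

theorem legendre_perturbedSuppFn_le_add (hv : ∀ y, |v y| ≤ M) (s t : ℝ) (x : Euc n) :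
    legendre (perturbedSuppFn f v t) x ≤
      legendre (perturbedSuppFn f v s) x + ((M * |s - t| : ℝ) : EReal) := by
  refine legendre_le_add_of_le_add (fun y => ?_) x
  rw [perturbedSuppFn, perturbedSuppFn, add_assoc, ← EReal.coe_add]
  gcongr
  have : |(s - t) * v y| ≤ |s - t| * M := by rw [abs_mul]; gcongr; exact hv y
  nlinarith [le_abs_self ((s - t) * v y)]

theorem legendre_perturbedSuppFn_le (hv : ∀ y, |v y| ≤ M) (hx : 0 < f x) (t : ℝ) :
    legendre (perturbedSuppFn f v t) x ≤ ((potential f x + |t| * M : ℝ) : EReal) := by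
  calc legendre (perturbedSuppFn f v t) x
      ≤ legendre (perturbedSuppFn f v 0) x + ((M * |0 - t| : ℝ) : EReal) :=
        legendre_perturbedSuppFn_le_add hv 0 t x
    _ ≤ potential f x + ((M * |0 - t| : ℝ) : EReal) := by
        rw [perturbedSuppFn_zero, ← negLog_of_pos hx]
        gcongr
        exact legendre_legendre_le _ x
    _ = ((potential f x + |t| * M : ℝ) : EReal) := by
        rw [zero_sub, abs_neg, mul_comm, EReal.coe_add]

theorem IsLogConcave.legendre_suppFn_eq_top (hlc : IsLogConcave f) {B : ℝ} (hB : ∀ z, f z ≤ B)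
    (hx : x ∉ closure (posSet f)) : legendre (suppFn f) x = ⊤ := by
  obtain ⟨l, s, hls, hsx⟩ :=
    geometric_hahn_banach_closed_point hlc.convex_posSet.closure isClosed_closure hx
  set u := (InnerProductSpace.toDual ℝ (Euc n)).symm l
  have hu : ∀ w, inner ℝ u w = l w := fun w => InnerProductSpace.toDual_symm_apply
  rw [EReal.eq_top_iff_forall_lt]
  intro ρ
  obtain ⟨N, hN⟩ := exists_nat_gt ((ρ + Real.log B) / (l x - s))
  have hsupp : suppFn f ((N : ℝ) • u) ≤ ((N * s + Real.log B : ℝ) : EReal) := by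
    refine suppFn_le hlc.1 fun z hz => ?_
    rw [real_inner_smul_left, hu]
    have h1 := hls z (subset_closure hz)
    have h2 := Real.log_le_log hz (hB z)
    have h3 : (0 : ℝ) ≤ N := N.cast_nonneg
    simp only [potential]
    nlinarith
  calc (ρ : EReal) < ((inner ℝ x ((N : ℝ) • u) - (N * s + Real.log B) : ℝ) : EReal) := by
        rw [EReal.coe_lt_coe_iff, real_inner_comm, real_inner_smul_left, hu]
        rw [div_lt_iff₀ (sub_pos.mpr hsx)] at hN
        linarith
    _ ≤ (inner ℝ x ((N : ℝ) • u) : ℝ) - suppFn f ((N : ℝ) • u) := by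
        rw [EReal.coe_sub]
        exact EReal.sub_le_sub le_rfl hsupp
    _ ≤ legendre (suppFn f) x := coe_inner_sub_le_legendre _ _ _

theorem IsLogConcave.expNeg_legendre_perturbedSuppFn_eq_zero (hlc : IsLogConcave f) {B : ℝ}
    (hB : ∀ z, f z ≤ B) (hv : ∀ y, |v y| ≤ M) (hx : x ∉ closure (posSet f)) (t : ℝ) :
    expNeg (legendre (perturbedSuppFn f v t) x) = 0 := by
  have h := legendre_perturbedSuppFn_le_add (f := f) hv t 0 x
  rw [perturbedSuppFn_zero, hlc.legendre_suppFn_eq_top hB hx, top_le_iff] at h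
  have htop : legendre (perturbedSuppFn f v t) x = ⊤ := by
    by_contra hne
    exact EReal.add_ne_top hne (EReal.coe_ne_top _) h
  rw [htop, expNeg_top]

end Perturbation

section Regular

variable {f v : Euc n → ℝ} {M : ℝ} {x : Euc n}

theorem coe_sub_le_legendre_perturbedSuppFn (hlc : IsLogConcave f)
    (hx : x ∈ interior (posSet f)) (hd : DifferentiableAt ℝ (potential f) x) (t : ℝ) :
    ((potential f x - t * v (negLogGrad f x) : ℝ) : EReal) ≤
      legendre (perturbedSuppFn f v t) x := by
  refine le_trans (le_of_eq ?_) (coe_inner_sub_le_legendre _ x (negLogGrad f x))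
  rw [perturbedSuppFn, suppFn_negLogGrad hlc hx hd, ← EReal.coe_add, ← EReal.coe_sub,
    real_inner_comm]
  ring_nf

theorem legendre_suppFn_eq_potential (hlc : IsLogConcave f) (hx : x ∈ interior (posSet f))
    (hd : DifferentiableAt ℝ (potential f) x) :
    legendre (suppFn f) x = potential f x := by
  refine le_antisymm ((legendre_legendre_le _ x).trans_eq
    (negLog_of_pos (pos_of_mem_interior_posSet hx)))
    (le_trans (le_of_eq ?_) (coe_inner_sub_le_legendre _ x (negLogGrad f x)))
  rw [suppFn_negLogGrad hlc hx hd, ← EReal.coe_sub, real_inner_comm]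
  ring_nf

theorem coe_toReal_legendre_perturbedSuppFn (hlc : IsLogConcave f)
    (hx : x ∈ interior (posSet f)) (hd : DifferentiableAt ℝ (potential f) x)
    (hv : ∀ y, |v y| ≤ M) (t : ℝ) :
    ((legendre (perturbedSuppFn f v t) x).toReal : EReal) = legendre (perturbedSuppFn f v t) x :=
  EReal.coe_toReal
    (ne_top_of_le_ne_top (EReal.coe_ne_top _)
      (legendre_perturbedSuppFn_le hv (pos_of_mem_interior_posSet hx) t))
    (ne_bot_of_le_ne_bot (EReal.coe_ne_bot _) (coe_sub_le_legendre_perturbedSuppFn hlc hx hd t))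

theorem legendre_perturbedSuppFn_le_of_abs_lt (hx : x ∈ interior (posSet f))
    (hd : DifferentiableAt ℝ (potential f) x) (hv : ∀ y, |v y| ≤ M)
    (hvc : ContinuousAt v (negLogGrad f x)) {ε : ℝ} (hε : 0 < ε) :
    ∃ δ > 0, ∀ t, |t| < δ → legendre (perturbedSuppFn f v t) x ≤
      ((potential f x - t * v (negLogGrad f x) + ε * |t| : ℝ) : EReal) := by
  have hM : 0 ≤ M := (abs_nonneg _).trans (hv 0)
  obtain ⟨ρ, hρ, hvρ⟩ := Metric.continuousAt_iff.mp hvc ε hε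
  obtain ⟨r, hr, hgrowth⟩ := exists_pos_coe_le_suppFn hx hd (half_pos hρ)
  set y₀ := negLogGrad f x
  refine ⟨r * ρ / (4 * M + 1), by positivity, fun t ht => legendre_add_le fun y => ?_⟩
  rw [lt_div_iff₀ (by positivity)] at ht
  -- near `y₀` the continuity of `v` controls `t (v y - v y₀)`; far from it the linear growth of
  -- `ψ` beats `2 |t| M`
  by_cases hy : dist y y₀ < ρ
  · refine le_trans ?_ (coe_inner_sub_potential_le_suppFn (pos_of_mem_interior_posSet hx) y)
    rw [EReal.coe_le_coe_iff, real_inner_comm]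
    have hdiff : -(t * (v y - v y₀)) ≤ |t| * ε := by
      refine (neg_le_abs _).trans ?_
      rw [abs_mul]
      exact mul_le_mul_of_nonneg_left (Real.dist_eq _ _ ▸ hvρ hy).le (abs_nonneg t)
    linarith
  · refine le_trans ?_ (hgrowth y)
    rw [EReal.coe_le_coe_iff, real_inner_comm]
    rw [not_lt, dist_eq_norm] at hy
    have hvt : ∀ y, |t * v y| ≤ |t| * M := fun y => by rw [abs_mul]; gcongr; exact hv y
    nlinarith [abs_le.mp (hvt y), abs_le.mp (hvt y₀), mul_nonneg hε.le (abs_nonneg t),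
      mul_le_mul_of_nonneg_left hy hr.le]

theorem hasDerivAt_toReal_legendre_perturbedSuppFn (hlc : IsLogConcave f)
    (hx : x ∈ interior (posSet f)) (hd : DifferentiableAt ℝ (potential f) x)
    (hv : ∀ y, |v y| ≤ M) (hvc : ContinuousAt v (negLogGrad f x)) :
    HasDerivAt (fun t => (legendre (perturbedSuppFn f v t) x).toReal)
      (-v (negLogGrad f x)) 0 := by
  have hcoe := coe_toReal_legendre_perturbedSuppFn hlc hx hd hv
  have hA0 : (legendre (perturbedSuppFn f v 0) x).toReal = potential f x := by
    rw [perturbedSuppFn_zero, legendre_suppFn_eq_potential hlc hx hd, EReal.toReal_coe]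
  rw [hasDerivAt_iff_isLittleO, Asymptotics.isLittleO_iff]
  intro ε hε
  obtain ⟨δ, hδ, hup⟩ := legendre_perturbedSuppFn_le_of_abs_lt hx hd hv hvc hε
  filter_upwards [Metric.ball_mem_nhds 0 hδ] with t ht
  have hlow := coe_sub_le_legendre_perturbedSuppFn (v := v) hlc hx hd t
  have hup := hup t (by simpa using ht)
  rw [← hcoe t, EReal.coe_le_coe_iff] at hlow hup
  rw [hA0, Real.norm_eq_abs, Real.norm_eq_abs, sub_zero, smul_eq_mul, abs_le]
  constructor <;> nlinarith [abs_nonneg t]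

theorem abs_sub_toReal_legendre_perturbedSuppFn_le (hlc : IsLogConcave f)
    (hx : x ∈ interior (posSet f)) (hd : DifferentiableAt ℝ (potential f) x)
    (hv : ∀ y, |v y| ≤ M) (s t : ℝ) :
    |(legendre (perturbedSuppFn f v t) x).toReal - (legendre (perturbedSuppFn f v s) x).toReal| ≤
      M * |t - s| := by
  have hcoe := coe_toReal_legendre_perturbedSuppFn hlc hx hd hv
  have h₁ := legendre_perturbedSuppFn_le_add (f := f) hv s t x
  have h₂ := legendre_perturbedSuppFn_le_add (f := f) hv t s x
  rw [← hcoe t, ← hcoe s, ← EReal.coe_add, EReal.coe_le_coe_iff] at h₁ h₂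
  rw [abs_sub_comm s t] at h₁
  exact abs_sub_le_iff.mpr ⟨by linarith, by linarith⟩

theorem toReal_expNeg_legendre_perturbedSuppFn (hlc : IsLogConcave f)
    (hx : x ∈ interior (posSet f)) (hd : DifferentiableAt ℝ (potential f) x)
    (hv : ∀ y, |v y| ≤ M) (t : ℝ) :
    (expNeg (legendre (perturbedSuppFn f v t) x)).toReal =
      Real.exp (-(legendre (perturbedSuppFn f v t) x).toReal) := by
  conv_lhs => rw [← coe_toReal_legendre_perturbedSuppFn hlc hx hd hv t]
  rw [expNeg_coe, ENNReal.toReal_ofReal (Real.exp_nonneg _)]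

theorem hasDerivAt_toReal_expNeg_legendre_perturbedSuppFn (hlc : IsLogConcave f)
    (hx : x ∈ interior (posSet f)) (hd : DifferentiableAt ℝ (potential f) x)
    (hv : ∀ y, |v y| ≤ M) (hvc : ContinuousAt v (negLogGrad f x)) :
    HasDerivAt (fun t => (expNeg (legendre (perturbedSuppFn f v t) x)).toReal)
      (v (negLogGrad f x) * f x) 0 := by
  have h := (hasDerivAt_toReal_legendre_perturbedSuppFn hlc hx hd hv hvc).neg.exp
  simp only [Pi.neg_apply] at h
  rw [perturbedSuppFn_zero, legendre_suppFn_eq_potential hlc hx hd, EReal.toReal_coe,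
    exp_neg_potential (pos_of_mem_interior_posSet hx), neg_neg, mul_comm] at h
  convert h using 1
  funext t
  exact toReal_expNeg_legendre_perturbedSuppFn hlc hx hd hv t

theorem lipschitzOnWith_toReal_expNeg_legendre_perturbedSuppFn (hlc : IsLogConcave f)
    (hx : x ∈ interior (posSet f)) (hd : DifferentiableAt ℝ (potential f) x)
    (hv : ∀ y, |v y| ≤ M) :
    LipschitzOnWith (Real.nnabs (Real.exp M * M * f x))
      (fun t => (expNeg (legendre (perturbedSuppFn f v t) x)).toReal) (Metric.ball 0 1) := by
  have hM : 0 ≤ M := (abs_nonneg _).trans (hv 0)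
  have hfx := pos_of_mem_interior_posSet hx
  have hcoe := coe_toReal_legendre_perturbedSuppFn hlc hx hd hv
  have hbound : ∀ t ∈ Metric.ball (0 : ℝ) 1,
      -(legendre (perturbedSuppFn f v t) x).toReal ≤ M - potential f x := by
    intro t ht
    have hlow := coe_sub_le_legendre_perturbedSuppFn (v := v) hlc hx hd t
    rw [← hcoe t, EReal.coe_le_coe_iff] at hlow
    rw [mem_ball_zero_iff, Real.norm_eq_abs] at ht
    have := (le_abs_self _).trans ((abs_mul t _).trans_le
      (mul_le_mul (le_of_lt ht) (hv (negLogGrad f x)) (abs_nonneg _) zero_le_one))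
    linarith
  refine LipschitzOnWith.of_dist_le_mul fun t ht s hs => ?_
  rw [toReal_expNeg_legendre_perturbedSuppFn hlc hx hd hv,
    toReal_expNeg_legendre_perturbedSuppFn hlc hx hd hv, Real.dist_eq, Real.dist_eq,
    Real.coe_nnabs, abs_of_nonneg (mul_nonneg (mul_nonneg (Real.exp_nonneg M) hM) hfx.le)]
  calc _ ≤ Real.exp (M - potential f x) * |-(legendre (perturbedSuppFn f v t) x).toReal -
        -(legendre (perturbedSuppFn f v s) x).toReal| :=
        Real.abs_exp_sub_exp_le (hbound t ht) (hbound s hs)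
    _ ≤ Real.exp (M - potential f x) * (M * |t - s|) := by
        rw [neg_sub_neg, abs_sub_comm]
        gcongr
        exact abs_sub_toReal_legendre_perturbedSuppFn_le hlc hx hd hv s t
    _ = Real.exp M * M * f x * |t - s| := by
        rw [sub_eq_add_neg, Real.exp_add, exp_neg_potential hfx]
        ring

end Regular

section Global

variable {f : Euc n → ℝ}

theorem IsLogConcave.ae_differentiableAt_or_notMem_closure (hlc : IsLogConcave f) :
    ∀ᵐ x, (x ∈ interior (posSet f) ∧ DifferentiableAt ℝ (potential f) x) ∨
      x ∉ closure (posSet f) := by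
  have hfr : ∀ᵐ x, x ∉ frontier (posSet f) :=
    measure_eq_zero_iff_ae_notMem.mp (hlc.convex_posSet.addHaar_frontier volume)
  filter_upwards [hfr, hlc.convexOn_potential.ae_differentiableAt_of_mem_interior volume]
    with x hfr hd
  by_cases hcl : x ∈ closure (posSet f)
  · have hint : x ∈ interior (posSet f) := by
      by_contra h
      exact hfr ⟨hcl, h⟩
    exact .inl ⟨hint, hd hint⟩
  · exact .inr hcl

theorem IsLogConcave.interior_posSet_nonempty (hlc : IsLogConcave f)
    (hpos : 0 < ∫⁻ x, ENNReal.ofReal (f x)) : (interior (posSet f)).Nonempty := by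
  rw [nonempty_iff_ne_empty]
  intro hint
  have hnull : volume (posSet f) = 0 := by
    refine measure_mono_null (fun y hy => ?_) (hlc.convex_posSet.addHaar_frontier volume)
    rw [frontier, hint, sdiff_empty]
    exact subset_closure hy
  refine hpos.ne' ((lintegral_congr_ae ?_).trans lintegral_zero)
  filter_upwards [measure_eq_zero_iff_ae_notMem.mp hnull] with x hx
  exact ENNReal.ofReal_eq_zero.mpr (not_lt.mp hx)

theorem IsLogConcave.exists_ball_le (hlc : IsLogConcave f)
    (hpos : 0 < ∫⁻ x, ENNReal.ofReal (f x)) :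
    ∃ x₀, ∃ r > 0, ∃ c > 0, ∀ y ∈ Metric.ball x₀ r, c ≤ f y := by
  obtain ⟨x₀, hx₀⟩ := hlc.interior_posSet_nonempty hpos
  have hcont : ContinuousAt (potential f) x₀ :=
    hlc.convexOn_potential.continuousOn_interior.continuousAt (isOpen_interior.mem_nhds hx₀)
  obtain ⟨r, hr, hball⟩ := Metric.mem_nhds_iff.mp
    ((hcont.eventually (gt_mem_nhds (lt_add_one _))).and (isOpen_interior.mem_nhds hx₀))
  refine ⟨x₀, r, hr, Real.exp (-(potential f x₀ + 1)), Real.exp_pos _, fun y hy => ?_⟩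
  obtain ⟨hlt, hy⟩ := hball hy
  rw [← exp_neg_potential (pos_of_mem_interior_posSet hy)]
  exact Real.exp_le_exp.mpr (neg_le_neg hlt.le)

theorem IsLogConcave.mul_le_sq_midpoint (hlc : IsLogConcave f) (a b : Euc n) :
    f a * f b ≤ f ((1 / 2 : ℝ) • (a + b)) ^ 2 := by
  have hab : 0 ≤ f a * f b := mul_nonneg (hlc.1 a) (hlc.1 b)
  have h := hlc.2 a b (1 / 2) (by norm_num) (by norm_num)
  rw [show (1 : ℝ) - 1 / 2 = 1 / 2 by norm_num, ← smul_add,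
    ← Real.mul_rpow (hlc.1 a) (hlc.1 b), ← Real.sqrt_eq_rpow] at h
  calc f a * f b = Real.sqrt (f a * f b) ^ 2 := (Real.sq_sqrt hab).symm
    _ ≤ _ := pow_le_pow_left₀ (Real.sqrt_nonneg _) h 2

theorem IsLogConcave.exists_forall_le (hlc : IsLogConcave f)
    (hpos : 0 < ∫⁻ x, ENNReal.ofReal (f x)) (hfin : (∫⁻ x, ENNReal.ofReal (f x)) < ⊤) :
    ∃ B, ∀ z, f z ≤ B := by
  obtain ⟨x₀, r, hr, c, hc, hball⟩ := hlc.exists_ball_le hpos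
  set I := ∫⁻ x, ENNReal.ofReal (f x)
  set V := volume (Metric.ball (0 : Euc n) (r / 2))
  have hV : 0 < V := Metric.measure_ball_pos _ _ (by positivity)
  set D := (I / V).toReal
  refine ⟨D ^ 2 / c, fun z => ?_⟩
  have hmid : ∀ w ∈ Metric.ball ((1 / 2 : ℝ) • (x₀ + z)) (r / 2),
      Real.sqrt (c * f z) ≤ f w := by
    intro w hw
    have hb : (2 : ℝ) • w - z ∈ Metric.ball x₀ r := by
      rw [mem_ball_iff_norm] at hw ⊢
      rw [show (2 : ℝ) • w - z - x₀ = (2 : ℝ) • (w - (1 / 2 : ℝ) • (x₀ + z)) by module,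
        norm_smul, Real.norm_two]
      linarith
    have h := (mul_le_mul_of_nonneg_right (hball _ hb) (hlc.1 z)).trans (hlc.mul_le_sq_midpoint _ z)
    rw [show (1 / 2 : ℝ) • ((2 : ℝ) • w - z + z) = w by module] at h
    exact Real.sqrt_le_iff.mpr ⟨hlc.1 w, h⟩
  have hint : ENNReal.ofReal (Real.sqrt (c * f z)) * V ≤ I :=
    calc ENNReal.ofReal (Real.sqrt (c * f z)) * V
        = ∫⁻ _ in Metric.ball ((1 / 2 : ℝ) • (x₀ + z)) (r / 2),
            ENNReal.ofReal (Real.sqrt (c * f z)) := by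
          rw [setLIntegral_const, Measure.addHaar_ball_center]
      _ ≤ ∫⁻ w in Metric.ball ((1 / 2 : ℝ) • (x₀ + z)) (r / 2), ENNReal.ofReal (f w) :=
          setLIntegral_mono' measurableSet_ball fun w hw => ENNReal.ofReal_le_ofReal (hmid w hw)
      _ ≤ I := setLIntegral_le_lintegral _ _
  have hD : Real.sqrt (c * f z) ≤ D :=
    (ENNReal.ofReal_le_iff_le_toReal (ENNReal.div_lt_top hfin.ne hV.ne').ne).mp
      ((ENNReal.le_div_iff_mul_le (.inl hV.ne') (.inl measure_ball_lt_top.ne)).mpr hint)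
  rw [le_div_iff₀ hc, mul_comm, ← Real.sq_sqrt (mul_nonneg hc.le (hlc.1 z))]
  exact pow_le_pow_left₀ (Real.sqrt_nonneg _) hD 2

end Global

section AlmostEverywhere

variable {f v : Euc n → ℝ} {M B : ℝ}

theorem IsLogConcave.eq_zero_of_notMem_closure (hlc : IsLogConcave f) {x : Euc n}
    (hx : x ∉ closure (posSet f)) : f x = 0 :=
  le_antisymm (not_lt.mp fun h => hx (subset_closure h)) (hlc.1 x)

theorem IsLogConcave.ae_expNeg_legendre_perturbedSuppFn_lt_top (hlc : IsLogConcave f)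
    (hB : ∀ z, f z ≤ B) (hv : ∀ y, |v y| ≤ M) (t : ℝ) :
    ∀ᵐ x, expNeg (legendre (perturbedSuppFn f v t) x) < ⊤ := by
  filter_upwards [hlc.ae_differentiableAt_or_notMem_closure] with x hx
  rcases hx with ⟨hx, hd⟩ | hx
  · exact expNeg_lt_top
      (ne_bot_of_le_ne_bot (EReal.coe_ne_bot _) (coe_sub_le_legendre_perturbedSuppFn hlc hx hd t))
  · rw [hlc.expNeg_legendre_perturbedSuppFn_eq_zero hB hv hx]
    exact ENNReal.zero_lt_top

theorem IsLogConcave.toReal_expNeg_legendre_suppFn_ae_eq (hlc : IsLogConcave f)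
    (hB : ∀ z, f z ≤ B) : (fun x => (expNeg (legendre (suppFn f) x)).toReal) =ᵐ[volume] f := by
  filter_upwards [hlc.ae_differentiableAt_or_notMem_closure] with x hx
  rcases hx with ⟨hx, hd⟩ | hx
  · rw [legendre_suppFn_eq_potential hlc hx hd, expNeg_coe,
      ENNReal.toReal_ofReal (Real.exp_nonneg _), exp_neg_potential (pos_of_mem_interior_posSet hx)]
  · rw [hlc.legendre_suppFn_eq_top hB hx, expNeg_top, hlc.eq_zero_of_notMem_closure hx,
      ENNReal.toReal_zero]

theorem IsLogConcave.ae_lipschitzOnWith_toReal_expNeg_legendre_perturbedSuppFn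
    (hlc : IsLogConcave f) (hB : ∀ z, f z ≤ B) (hv : ∀ y, |v y| ≤ M) :
    ∀ᵐ x, LipschitzOnWith (Real.nnabs (Real.exp M * M * f x))
      (fun t => (expNeg (legendre (perturbedSuppFn f v t) x)).toReal) (Metric.ball 0 1) := by
  filter_upwards [hlc.ae_differentiableAt_or_notMem_closure] with x hx
  rcases hx with ⟨hx, hd⟩ | hx
  · exact lipschitzOnWith_toReal_expNeg_legendre_perturbedSuppFn hlc hx hd hv
  · refine LipschitzOnWith.of_dist_le_mul fun t _ s _ => ?_
    simp only [hlc.expNeg_legendre_perturbedSuppFn_eq_zero hB hv hx, dist_self]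
    positivity

theorem IsLogConcave.ae_hasDerivAt_toReal_expNeg_legendre_perturbedSuppFn
    (hlc : IsLogConcave f) (hB : ∀ z, f z ≤ B) (hv : ∀ y, |v y| ≤ M) (hvc : Continuous v) :
    ∀ᵐ x, HasDerivAt (fun t => (expNeg (legendre (perturbedSuppFn f v t) x)).toReal)
      (v (negLogGrad f x) * f x) 0 := by
  filter_upwards [hlc.ae_differentiableAt_or_notMem_closure] with x hx
  rcases hx with ⟨hx, hd⟩ | hx
  · exact hasDerivAt_toReal_expNeg_legendre_perturbedSuppFn hlc hx hd hv hvc.continuousAt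
  · simp only [hlc.expNeg_legendre_perturbedSuppFn_eq_zero hB hv hx, ENNReal.toReal_zero,
      hlc.eq_zero_of_notMem_closure hx, mul_zero]
    exact hasDerivAt_const 0 0

end AlmostEverywhere

/-- for bounded continuous `v`, the two-sided derivative
`(d/dt)|_{t=0} ∫ e^{-(h_f + tv)*}` exists and equals `∫ v dS_f`. -/
theorem statement16 {n : ℕ} (f : Euc n → ℝ)
    (hlc : IsLogConcave f) (husc : UpperSemicontinuous f)
    (hpos : 0 < ∫⁻ x, ENNReal.ofReal (f x))
    (hfin : (∫⁻ x, ENNReal.ofReal (f x)) < ⊤)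
    (v : Euc n → ℝ) (hvcont : Continuous v) (hvbdd : ∃ M : ℝ, ∀ y, |v y| ≤ M) :
    HasDerivAt
      (fun t : ℝ =>
        (∫⁻ x, expNeg (legendre (fun y => suppFn f y + ((t * v y : ℝ) : EReal)) x)).toReal)
      (∫ x, v (negLogGrad f x) * f x) 0 := by
  obtain ⟨M, hv⟩ := hvbdd
  obtain ⟨B, hB⟩ := hlc.exists_forall_le hpos hfin
  have hf : Integrable f := ⟨husc.measurable.aestronglyMeasurable,
    (hasFiniteIntegral_iff_ofReal (ae_of_all _ hlc.1)).mpr hfin⟩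
  have hmeas : ∀ t, Measurable fun x => expNeg (legendre (perturbedSuppFn f v t) x) :=
    fun t => measurable_expNeg.comp (lowerSemicontinuous_legendre _).measurable
  have hint : ∀ t, (∫⁻ x, expNeg (legendre (perturbedSuppFn f v t) x)).toReal =
      ∫ x, (expNeg (legendre (perturbedSuppFn f v t) x)).toReal := fun t =>
    (integral_toReal (hmeas t).aemeasurable
      (hlc.ae_expNeg_legendre_perturbedSuppFn_lt_top hB hv t)).symm
  change HasDerivAt (fun t => (∫⁻ x, expNeg (legendre (perturbedSuppFn f v t) x)).toReal) _ 0
  simp_rw [hint]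
  refine (hasDerivAt_integral_of_dominated_loc_of_lip (Metric.ball_mem_nhds 0 one_pos)
    (Eventually.of_forall fun t => (hmeas t).ennreal_toReal.aestronglyMeasurable) ?_
    ((hvcont.measurable.comp (measurable_negLogGrad f)).mul husc.measurable).aestronglyMeasurable
    (hlc.ae_lipschitzOnWith_toReal_expNeg_legendre_perturbedSuppFn hB hv) (hf.const_mul _)
    (hlc.ae_hasDerivAt_toReal_expNeg_legendre_perturbedSuppFn hB hv hvcont)).2
  rw [perturbedSuppFn_zero]
  exact hf.congr (hlc.toReal_expNeg_legendre_suppFn_ae_eq hB).symm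

end
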